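/- Define f : (1,∞) → ℝ by f(x) = 2/(3x) − 1/(12(x−1)) + 5/(12(x+1)) − ln(1 + 1/x) − (1/(12(x+1)³) + 11/(120(x+1)⁴)) + (1/(12x³) + 11/(120x⁴)). Then f(x) < 0 for every x ∈ (1,∞). -/
import Mathlib

noncomputable def f (x : ℝ) : ℝ :=
  2 / (3 * x) - 1 / (12 * (x - 1)) + 5 / (12 * (x + 1)) - Real.log (1 + 1 / x)
    - (1 / (12 * (x + 1) ^ 3) + 11 / (120 * (x + 1) ^ 4))
    + (1 / (12 * x ^ 3) + 11 / (120 * x ^ 4))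

lemma log_lb (t : ℝ) (ht : 0 < t) :
    t - t^2/2 + t^3/3 - t^4/4 + t^5/5 - t^6/6 < Real.log (1 + t) := by
  set g : ℝ → ℝ := fun u => Real.log (1 + u) - (u - u^2/2 + u^3/3 - u^4/4 + u^5/5 - u^6/6)
    with hg
  have hmono : StrictMonoOn g (Set.Ici (0 : ℝ)) := by
    apply strictMonoOn_of_deriv_pos (convex_Ici 0)
    · apply ContinuousOn.sub
      · apply ContinuousOn.log (by fun_prop)
        intro u hu
        simp only [Set.mem_Ici] at hu
        linarith
      · fun_prop
    · intro u hu
      rw [interior_Ici, Set.mem_Ioi] at hu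
      have h1 : (0:ℝ) < 1 + u := by linarith
      have hd : HasDerivAt g (1/(1+u) - (1 - u + u^2 - u^3 + u^4 - u^5)) u := by
        have hlog : HasDerivAt (fun u : ℝ => Real.log (1 + u)) (1/(1+u)) u := by
          have := ((hasDerivAt_id u).const_add 1).log (ne_of_gt h1)
          simpa using this
        have hpoly : HasDerivAt (fun u : ℝ => u - u^2/2 + u^3/3 - u^4/4 + u^5/5 - u^6/6)
            (1 - u + u^2 - u^3 + u^4 - u^5) u := by
          have : HasDerivAt (fun u : ℝ => u - u^2/2 + u^3/3 - u^4/4 + u^5/5 - u^6/6)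
              (1 - (2*u^1)/2 + (3*u^2)/3 - (4*u^3)/4 + (5*u^4)/5 - (6*u^5)/6) u := by
            exact (((((hasDerivAt_id u).sub ((hasDerivAt_pow 2 u).div_const 2)).add
              ((hasDerivAt_pow 3 u).div_const 3)).sub ((hasDerivAt_pow 4 u).div_const 4)).add
              ((hasDerivAt_pow 5 u).div_const 5)).sub ((hasDerivAt_pow 6 u).div_const 6)
          convert this using 1
          ring
        exact hlog.sub hpoly
      rw [hd.deriv]
      have : 1/(1+u) - (1 - u + u^2 - u^3 + u^4 - u^5) = u^6 / (1+u) := by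
        field_simp
        ring
      rw [this]
      positivity
  have h0 : g 0 = 0 := by simp [hg]
  have := hmono (Set.self_mem_Ici) (Set.mem_Ici.mpr (le_of_lt ht)) ht
  rw [h0] at this
  simp only [hg] at this
  linarith

theorem f_neg : ∀ x ∈ Set.Ioi (1 : ℝ), f x < 0 := by
  intro x hx
  rw [Set.mem_Ioi] at hx
  have hx0 : (0:ℝ) < x := by linarith
  have hx1 : (0:ℝ) < x - 1 := by linarith
  have hxp : (0:ℝ) < x + 1 := by linarith
  have ht : (0:ℝ) < 1/x := by positivity
  have hlog := log_lb (1/x) ht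
  have key : 2 / (3 * x) - 1 / (12 * (x - 1)) + 5 / (12 * (x + 1))
      - ((1/x) - (1/x)^2/2 + (1/x)^3/3 - (1/x)^4/4 + (1/x)^5/5 - (1/x)^6/6)
      - (1 / (12 * (x + 1) ^ 3) + 11 / (120 * (x + 1) ^ 4))
      + (1 / (12 * x ^ 3) + 11 / (120 * x ^ 4))
      = -(150*x^5 + 120*x^4 + 15*x^3 + 27*x^2 + 108*x + 60)
        / (360 * x^6 * (x-1) * (x+1)^4) := by
    field_simp
    ring
  have hneg : -(150*x^5 + 120*x^4 + 15*x^3 + 27*x^2 + 108*x + 60)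
      / (360 * x^6 * (x-1) * (x+1)^4) < 0 := by
    apply div_neg_of_neg_of_pos
    · have h : (0:ℝ) < 150*x^5 + 120*x^4 + 15*x^3 + 27*x^2 + 108*x + 60 := by positivity
      linarith
    · positivity
  unfold f
  nlinarith [key, hneg, hlog]
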